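/- Let G be a simple graph that is s clique-uniform with respect to a clique partition F = {C_1, ..., C_k} (every clique of F has exactly s vertices), and let R_F = M_F^T M_F. Then the Consonni–Todeschini energy of R_F equals the adjacency energy of the clique partition graph: Σ_{i=1}^k |λ_i(R_F) − (Σ_{j=1}^k s_j^F)/k| = Σ_{i=1}^k |λ_i(P_G)|. -/

import Mathlib

/-! Two members of a clique partition share at most one vertex, since two common vertices would
span an edge lying in both. Hence `R_F = Mᵀ M` has off-diagonal entries `|C_j ∩ C_l| ∈ {0, 1}`,
i.e. `R_F = A(P_G) + s • 1` when every member has `s` vertices. Adding `s • 1` shifts every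
eigenvalue by `s`, which is also the mean of the `s_j`. -/

open Matrix Finset

/-- A clique partition of `G`: each member is a clique and every edge of `G`
lies in exactly one member. -/
def IsCliquePartition {n k : ℕ} (G : SimpleGraph (Fin n)) (F : Fin k → Finset (Fin n)) : Prop :=
  (∀ j, G.IsClique ↑(F j)) ∧ ∀ ⦃u v : Fin n⦄, G.Adj u v → ∃! j, u ∈ F j ∧ v ∈ F j

/-- The vertex-clique incidence matrix of the family `F`. -/
def vcMat {n k : ℕ} (F : Fin k → Finset (Fin n)) : Matrix (Fin n) (Fin k) ℝ :=
  fun i j => if i ∈ F j then 1 else 0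

/-- The clique-degree of vertex `i`: the number of members of `F` containing `i`. -/
def cliqueDeg {n k : ℕ} (F : Fin k → Finset (Fin n)) (i : Fin n) : ℕ :=
  (Finset.univ.filter fun j => i ∈ F j).card

/-- The adjacency matrix of the clique partition graph `P_G`:
two distinct members of `F` are adjacent iff they share a vertex. -/
def pgMat {n k : ℕ} (F : Fin k → Finset (Fin n)) : Matrix (Fin k) (Fin k) ℝ :=
  fun j l => if j ≠ l ∧ (F j ∩ F l).Nonempty then 1 else 0

/-- The `i`-th largest eigenvalue (0-based) of a real symmetric matrix. -/
noncomputable def eigsDesc {N : ℕ} (A : Matrix (Fin N) (Fin N) ℝ) : Fin N → ℝ :=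
  fun i => if hA : A.IsHermitian then (hA.eigenvalues ∘ Tuple.sort hA.eigenvalues) i.rev else 0

/-- The number of negative eigenvalues (with multiplicity) of a real symmetric matrix. -/
noncomputable def negInertia {m : Type*} [Fintype m] [DecidableEq m] (A : Matrix m m ℝ) : ℕ :=
  if hA : A.IsHermitian then (Finset.univ.filter fun i => hA.eigenvalues i < 0).card else 0

/-- The number of positive eigenvalues (with multiplicity) of a real symmetric matrix. -/
noncomputable def posInertia {m : Type*} [Fintype m] [DecidableEq m] (A : Matrix m m ℝ) : ℕ :=
  if hA : A.IsHermitian then (Finset.univ.filter fun i => 0 < hA.eigenvalues i).card else 0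

/-- The `i`-th largest value (0-based) of a tuple of naturals. -/
noncomputable def sortedDesc {N : ℕ} (f : Fin N → ℕ) : Fin N → ℕ :=
  fun i => (f ∘ Tuple.sort f) i.rev

namespace Matrix.IsHermitian

variable {m : Type*} [Fintype m] [DecidableEq m] {A : Matrix m m ℝ}

theorem map_eigenvalues_add_smul_one (hA : A.IsHermitian) (c : ℝ)
    (hB : (A + c • 1).IsHermitian) :
    univ.val.map hB.eigenvalues = univ.val.map (fun i => hA.eigenvalues i + c) := by
  have hcfc : cfc (fun x : ℝ => x + c) A = A + c • 1 := by
    rw [cfc_add_const c (fun x => x) A, cfc_id' ℝ A, Algebra.algebraMap_eq_smul_one]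
  have hcharpoly : (A + c • 1).charpoly = ∏ i, (Polynomial.X - .C (hA.eigenvalues i + c)) :=
    hcfc ▸ hA.charpoly_cfc_eq _
  have hroots := hB.roots_charpoly_eq_eigenvalues
  rw [hcharpoly, Polynomial.roots_prod _ _
    (prod_ne_zero_iff.2 fun i _ => Polynomial.X_sub_C_ne_zero _)] at hroots
  simp only [Polynomial.roots_X_sub_C] at hroots
  simpa using hroots.symm

end Matrix.IsHermitian

section eigsDesc

variable {N : ℕ} {A : Matrix (Fin N) (Fin N) ℝ}

theorem sum_comp_eigsDesc (hA : A.IsHermitian) (φ : ℝ → ℝ) :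
    ∑ i, φ (eigsDesc A i) = ∑ i, φ (hA.eigenvalues i) := by
  simp only [eigsDesc, dif_pos hA, Function.comp_apply]
  exact Equiv.sum_comp (Fin.revPerm.trans (Tuple.sort hA.eigenvalues)) (φ ∘ hA.eigenvalues)

theorem sum_comp_eigsDesc_add_smul_one (hA : A.IsHermitian) (c : ℝ) (φ : ℝ → ℝ) :
    ∑ i, φ (eigsDesc (A + c • 1) i) = ∑ i, φ (eigsDesc A i + c) := by
  have hB : (A + c • 1).IsHermitian := hA.add (isHermitian_one.smul (IsSelfAdjoint.all c))
  rw [sum_comp_eigsDesc hB, sum_comp_eigsDesc hA fun x => φ (x + c), sum_eq_multiset_sum,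
    sum_eq_multiset_sum]
  simpa only [Multiset.map_map, Function.comp_def] using
    congrArg (fun s => (s.map φ).sum) (hA.map_eigenvalues_add_smul_one c hB)

end eigsDesc

section CliquePartition

variable {n k : ℕ} {F : Fin k → Finset (Fin n)}

theorem vcMat_transpose_mul_self_apply (F : Fin k → Finset (Fin n)) (j l : Fin k) :
    ((vcMat F)ᵀ * vcMat F) j l = #(F j ∩ F l) := by
  simp only [mul_apply, transpose_apply, vcMat, boole_mul, ← ite_and, sum_boole]
  congr 2
  ext
  simp

theorem pgMat_isHermitian (F : Fin k → Finset (Fin n)) : (pgMat F).IsHermitian := by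
  ext j l
  simp only [conjTranspose_apply, star_trivial, pgMat, ne_comm, inter_comm]

theorem IsCliquePartition.card_inter_le_one {G : SimpleGraph (Fin n)} (hF : IsCliquePartition G F)
    {j l : Fin k} (hjl : j ≠ l) : #(F j ∩ F l) ≤ 1 := by
  refine card_le_one.2 fun u hu v hv => by_contra fun huv => hjl ?_
  rw [mem_inter] at hu hv
  obtain ⟨_, -, huniq⟩ := hF.2 (hF.1 j hu.1 hv.1 huv)
  exact (huniq j ⟨hu.1, hv.1⟩).trans (huniq l ⟨hu.2, hv.2⟩).symm

theorem IsCliquePartition.vcMat_transpose_mul_self {G : SimpleGraph (Fin n)}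
    (hF : IsCliquePartition G F) :
    (vcMat F)ᵀ * vcMat F = pgMat F + diagonal fun j => (#(F j) : ℝ) := by
  ext j l
  rw [vcMat_transpose_mul_self_apply, Matrix.add_apply, pgMat]
  obtain rfl | hjl := eq_or_ne j l
  · simp
  rw [diagonal_apply_ne _ hjl, add_zero]
  obtain hempty | hne := (F j ∩ F l).eq_empty_or_nonempty
  · simp [hempty]
  · simp [hjl, hne, le_antisymm (hF.card_inter_le_one hjl) (card_pos.2 hne)]

end CliquePartition

theorem stmt_13 {n k s : ℕ} (G : SimpleGraph (Fin n))
    (F : Fin k → Finset (Fin n)) (hF : IsCliquePartition G F)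
    (hs : ∀ j, (F j).card = s) :
    ∑ i : Fin k, |eigsDesc ((vcMat F)ᵀ * vcMat F) i - (∑ j : Fin k, ((F j).card : ℝ)) / k| =
      ∑ i : Fin k, |eigsDesc (pgMat F) i| := by
  obtain rfl | hk := eq_or_ne k 0
  · simp
  have hmean : (∑ j : Fin k, ((F j).card : ℝ)) / k = s := by
    simp [hs, hk]
  have hgram : (vcMat F)ᵀ * vcMat F = pgMat F + (s : ℝ) • 1 := by
    rw [hF.vcMat_transpose_mul_self, smul_one_eq_diagonal]
    simp [hs]
  rw [hmean, hgram, sum_comp_eigsDesc_add_smul_one (pgMat_isHermitian F) _ fun x => |x - s|]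
  simp
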